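/- arXiv:2408.13591 — 3 statements merged into one kernel-verified Lean document; each statement's English description precedes it below -/
import Mathlib

section
/- Let H be a separable real Hilbert space, T a bounded positive self-adjoint operator on H, r ∈ (0,1], λ ∈ (0,1), R > 0, and h ∈ H with ‖h‖ ≤ R. Set f* = T^r h (the r-th power of T applied to h) and f_λ = (T + λI)^{-1} T f*. Then ‖f_λ − f*‖ ≤ R·λ^r. -/
/-!
Write `R_λ = (T + λ)⁻¹`. Since `R_λ T f★ - f★ = -λ R_λ f★`, it suffices to bound the operator
norm `‖λ R_λ T^r‖ ≤ λ^r`. For `r = 1` this is `‖T R_λ‖ ≤ 1`. For `r < 1`, `T^r` is the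
Balakrishnan integral `(sin πr / π) ∫₀^∞ s^(r-1) T R_s ds`, and positivity of `T` gives
`‖R_λ T R_s‖ ≤ 1 / (λ + s)` (spectrally: `t / ((t + λ)(t + s)) ≤ 1 / (λ + s)`), so
`‖λ R_λ T^r‖ ≤ (sin πr / π) ∫₀^∞ s^(r-1) λ / (λ + s) ds = λ^r`, the last integral being
`λ^r B(r, 1 - r) = λ^r π / sin πr`.
-/

open MeasureTheory
open scoped RealInnerProductSpace ENNReal

section OperatorPowers

variable {H : Type*} [NormedAddCommGroup H] [InnerProductSpace ℝ H] [CompleteSpace H]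

/-- The Balakrishnan integral `(sin(rπ)/π) • ∫₀^∞ s^(r-1) • (T ∘ (T + s•I)⁻¹) ds`, which for a
bounded positive self-adjoint operator `T` and `r ∈ (0,1)` is the fractional power `T ^ r`
given by the continuous functional calculus. -/
noncomputable def fracPow (T : H →L[ℝ] H) (r : ℝ) : H →L[ℝ] H :=
  (Real.sin (r * Real.pi) / Real.pi) •
    ∫ s in Set.Ioi (0 : ℝ), s ^ (r - 1) • (T * Ring.inverse (T + s • 1))

/-- `T ^ r` for `r ≥ 0`: the functional-calculus power of a bounded positive self-adjoint
operator, obtained from integer powers and the Balakrishnan fractional power. -/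
noncomputable def nnPow (T : H →L[ℝ] H) (r : ℝ) : H →L[ℝ] H :=
  T ^ ⌊r⌋₊ * (if r - ⌊r⌋₊ = 0 then 1 else fracPow T (r - ⌊r⌋₊))

/-- The real power `T ^ r` of a bounded positive self-adjoint operator `T` (with `T`
moreover invertible when `r < 0`), as given by the continuous functional calculus. -/
noncomputable def opRpow (T : H →L[ℝ] H) (r : ℝ) : H →L[ℝ] H :=
  if 0 ≤ r then nnPow T r else Ring.inverse (nnPow T (-r))

end OperatorPowers

open Set Real
open scoped Ring

section OpRpow

variable {H : Type*} [NormedAddCommGroup H] [InnerProductSpace ℝ H]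

theorem opRpow_neg_one (A : H →L[ℝ] H) : opRpow A (-1) = A⁻¹ʳ := by
  simp [opRpow, nnPow]

theorem opRpow_one (T : H →L[ℝ] H) : opRpow T 1 = T := by
  simp [opRpow, nnPow]

theorem opRpow_of_mem_Ioo (T : H →L[ℝ] H) {r : ℝ} (hr : r ∈ Ioo 0 1) :
    opRpow T r = fracPow T r := by
  simp [opRpow, nnPow, hr.1.le, Nat.floor_eq_zero.2 hr.2, hr.1.ne']

end OpRpow

theorem integral_rpow_sub_one_mul_one_sub_rpow_neg {r : ℝ} (hr : r ∈ Ioo 0 1) :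
    ∫ u in Ioo (0 : ℝ) 1, u ^ (r - 1) * (1 - u) ^ (-r) = π / sin (π * r) := by
  have hbeta : Complex.betaIntegral r (1 - r) = Complex.Gamma r * Complex.Gamma (1 - r) := by
    simpa using (Complex.Gamma_mul_Gamma_eq_betaIntegral (s := r) (t := 1 - r)
      (by simpa using hr.1) (by simpa using hr.2)).symm
  have hreal : Complex.betaIntegral r (1 - r) =
      ↑(∫ u in (0 : ℝ)..1, u ^ (r - 1) * (1 - u) ^ (-r)) := by
    rw [Complex.betaIntegral, ← intervalIntegral.integral_ofReal]
    refine intervalIntegral.integral_congr fun u hu => ?_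
    rw [uIcc_of_le zero_le_one] at hu
    push_cast [Complex.ofReal_cpow hu.1, Complex.ofReal_cpow (sub_nonneg.2 hu.2)]
    ring_nf
  rw [← integral_Ioc_eq_integral_Ioo, ← intervalIntegral.integral_of_le zero_le_one,
    ← Complex.ofReal_inj, ← hreal, hbeta, ← Real.Gamma_mul_Gamma_one_sub, Complex.ofReal_mul,
    ← Complex.Gamma_ofReal, ← Complex.Gamma_ofReal]
  push_cast
  rfl

theorem image_div_one_add_Ioi : (fun t : ℝ => t / (1 + t)) '' Ioi 0 = Ioo 0 1 := by
  ext u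
  constructor
  · rintro ⟨t, ht : 0 < t, rfl⟩
    exact ⟨by positivity, (div_lt_one (by positivity)).2 (by linarith)⟩
  · rintro ⟨hu0, hu1⟩
    refine ⟨u / (1 - u), div_pos hu0 (sub_pos.2 hu1), ?_⟩
    have : 1 - u ≠ 0 := (sub_pos.2 hu1).ne'
    field_simp
    ring

/-- The substitution `u = t / (1 + t)` turns this into the Beta integral `B(r, 1 - r)`. -/
theorem integral_rpowIntegrand₀₁_one {r : ℝ} (hr : r ∈ Ioo 0 1) :
    ∫ t in Ioi 0, rpowIntegrand₀₁ r t 1 = π / sin (π * r) := by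
  have hderiv : ∀ t ∈ Ioi (0 : ℝ),
      HasDerivWithinAt (fun t => t / (1 + t)) (1 / (1 + t) ^ 2) (Ioi 0) t := by
    intro t (ht : 0 < t)
    have h1t : 1 + t ≠ 0 := by positivity
    refine (((hasDerivAt_id t).div ((hasDerivAt_id t).const_add 1) h1t).congr_deriv ?_)
      |>.hasDerivWithinAt
    simp only [id]
    field_simp
    ring
  have hinj : InjOn (fun t : ℝ => t / (1 + t)) (Ioi 0) := by
    intro a (ha : 0 < a) b (hb : 0 < b) hab
    rw [div_eq_div_iff (by positivity) (by positivity)] at hab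
    linarith
  rw [← integral_rpow_sub_one_mul_one_sub_rpow_neg hr, ← image_div_one_add_Ioi,
    integral_image_eq_integral_abs_deriv_smul measurableSet_Ioi hderiv hinj]
  refine setIntegral_congr_fun measurableSet_Ioi fun t (ht : 0 < t) => ?_
  have h1t : 0 < 1 + t := by positivity
  have hsub : 1 - t / (1 + t) = (1 + t)⁻¹ := by field_simp; ring
  have : 0 < (1 + t) ^ r := by positivity
  rw [rpowIntegrand₀₁_eq_pow_div hr ht.le zero_le_one, hsub, smul_eq_mul,
    div_rpow ht.le h1t.le, inv_rpow h1t.le, rpow_neg h1t.le, inv_inv,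
    rpow_sub_one h1t.ne', abs_of_pos (by positivity)]
  field_simp
  ring

theorem norm_le_norm_add_of_inner_nonneg {F : Type*} [NormedAddCommGroup F]
    [InnerProductSpace ℝ F] {x y : F} (h : 0 ≤ ⟪x, y⟫) : ‖x‖ ≤ ‖x + y‖ := by
  refine le_of_sq_le_sq ?_ (norm_nonneg _)
  rw [norm_add_sq_real]
  nlinarith [sq_nonneg ‖y‖]

theorem Commute.ringInverse_right {M₀ : Type*} [MonoidWithZero M₀] {a b : M₀}
    (h : Commute a b) : Commute a b⁻¹ʳ := by
  by_cases hb : IsUnit b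
  · rw [Ring.inverse_of_isUnit hb]
    exact h.units_inv_right (u := hb.unit)
  · rw [Ring.inverse_non_unit b hb]
    exact Commute.zero_right a

theorem commute_ringInverse_add_smul_one {R A : Type*} [CommSemiring R] [Semiring A]
    [Algebra R A] (a : A) (s : R) : Commute a (a + s • 1)⁻¹ʳ :=
  ((Commute.refl a).add_right ((Commute.one_right a).smul_right s)).ringInverse_right

namespace ContinuousLinearMap

section RingInverse

variable {R M : Type*} [Semiring R] [TopologicalSpace M] [AddCommMonoid M] [Module R M]
  {A : M →L[R] M}

theorem apply_ringInverse_apply (hA : IsUnit A) (x : M) : A (A⁻¹ʳ x) = x := by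
  simpa using congr($(Ring.mul_inverse_cancel A hA) x)

theorem ringInverse_apply_apply (hA : IsUnit A) (x : M) : A⁻¹ʳ (A x) = x := by
  simpa using congr($(Ring.inverse_mul_cancel A hA) x)

end RingInverse

theorem ringInverse_add_smul_one_apply_sub {𝕜 E : Type*} [NontriviallyNormedField 𝕜]
    [NormedAddCommGroup E] [NormedSpace 𝕜 E] {T : E →L[𝕜] E} {a : 𝕜} (hA : IsUnit (T + a • 1))
    (x : E) : (T + a • 1)⁻¹ʳ (T x) - x = -(a • (T + a • 1)⁻¹ʳ x) := by
  have hTx : T x = (T + a • 1) x - a • x := by simp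
  rw [hTx, map_sub, map_smul, ringInverse_apply_apply hA]
  abel

end ContinuousLinearMap

namespace ContinuousLinearMap.IsPositive

variable {H : Type*} [NormedAddCommGroup H] [InnerProductSpace ℝ H] {T : H →L[ℝ] H}

theorem inner_apply_smul_nonneg (hT : T.IsPositive) {a : ℝ} (ha : 0 ≤ a) (x : H) :
    0 ≤ ⟪T x, a • x⟫ := by
  rw [real_inner_smul_right]
  exact mul_nonneg ha (hT.inner_nonneg_left x)

theorem norm_apply_le_norm_add_smul_one_apply (hT : T.IsPositive) {a : ℝ} (ha : 0 ≤ a)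
    (x : H) : ‖T x‖ ≤ ‖(T + a • 1) x‖ :=
  norm_le_norm_add_of_inner_nonneg (hT.inner_apply_smul_nonneg ha x)

theorem mul_norm_le_norm_add_smul_one_apply (hT : T.IsPositive) {a : ℝ} (ha : 0 ≤ a) (x : H) :
    a * ‖x‖ ≤ ‖(T + a • 1) x‖ := by
  have h := norm_le_norm_add_of_inner_nonneg
    (real_inner_comm (a • x) (T x) ▸ hT.inner_apply_smul_nonneg ha x)
  simpa [norm_smul, abs_of_nonneg ha, add_comm] using h

theorem mul_norm_apply_le_norm_add_smul_one_mul_add_smul_one_apply (hT : T.IsPositive)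
    {a b : ℝ} (ha : 0 ≤ a) (hb : 0 ≤ b) (x : H) :
    (a + b) * ‖T x‖ ≤ ‖((T + a • 1) * (T + b • 1)) x‖ := by
  have hx : ((T + a • 1) * (T + b • 1)) x = (a + b) • T x + (T (T x) + (a * b) • x) := by
    simp only [mul_apply_eq_comp, add_apply, smul_apply, one_apply_eq_self, map_add, map_smul,
      smul_add]
    module
  have hinner : 0 ≤ ⟪(a + b) • T x, T (T x) + (a * b) • x⟫ := by
    rw [inner_add_right, real_inner_smul_left, real_inner_smul_left, real_inner_smul_right]
    have := hT.inner_nonneg_right (T x)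
    have := hT.inner_nonneg_left x
    positivity
  simpa [hx, norm_smul, abs_of_nonneg (add_nonneg ha hb)] using
    norm_le_norm_add_of_inner_nonneg hinner

variable [CompleteSpace H]

theorem isUnit_add_smul_one (hT : T.IsPositive) {s : ℝ} (hs : 0 < s) :
    IsUnit (T + s • 1) := by
  refine isUnit_of_forall_le_norm_inner_map _ (c := ⟨s, hs.le⟩) hs fun x => ?_
  calc ‖x‖ ^ 2 * s ≤ ⟪T x, x⟫ + s * ‖x‖ ^ 2 := by nlinarith [hT.inner_nonneg_left x]
    _ = ⟪(T + s • 1) x, x⟫ := by simp [inner_add_left, real_inner_smul_left]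
    _ ≤ ‖⟪(T + s • 1) x, x⟫‖ := le_norm_self _

theorem norm_ringInverse_add_smul_one_le (hT : T.IsPositive) {s : ℝ} (hs : 0 < s) :
    ‖(T + s • 1)⁻¹ʳ‖ ≤ s⁻¹ := by
  refine opNorm_le_bound _ (inv_nonneg.2 hs.le) fun x => ?_
  have h := hT.mul_norm_le_norm_add_smul_one_apply hs.le ((T + s • 1)⁻¹ʳ x)
  rw [apply_ringInverse_apply (hT.isUnit_add_smul_one hs)] at h
  rwa [inv_mul_eq_div, le_div_iff₀' hs]

theorem norm_mul_ringInverse_add_smul_one_le_one (hT : T.IsPositive) {s : ℝ} (hs : 0 < s) :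
    ‖T * (T + s • 1)⁻¹ʳ‖ ≤ 1 := by
  refine opNorm_le_bound _ zero_le_one fun x => ?_
  have h := hT.norm_apply_le_norm_add_smul_one_apply hs.le ((T + s • 1)⁻¹ʳ x)
  rwa [apply_ringInverse_apply (hT.isUnit_add_smul_one hs), ← one_mul ‖x‖] at h

theorem norm_mul_ringInverse_add_smul_one_le (hT : T.IsPositive) {s : ℝ} (hs : 0 < s) :
    ‖T * (T + s • 1)⁻¹ʳ‖ ≤ (1 + ‖T‖) / (s + 1) := by
  have hmul : s * ‖T * (T + s • 1)⁻¹ʳ‖ ≤ ‖T‖ :=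
    calc s * ‖T * (T + s • 1)⁻¹ʳ‖ ≤ s * (‖T‖ * s⁻¹) := by
          gcongr
          exact (norm_mul_le _ _).trans (by gcongr; exact hT.norm_ringInverse_add_smul_one_le hs)
      _ = ‖T‖ := by field_simp
  rw [le_div_iff₀ (by positivity)]
  linarith [hT.norm_mul_ringInverse_add_smul_one_le_one hs]

theorem norm_ringInverse_add_smul_one_mul_mul_ringInverse_add_smul_one_le (hT : T.IsPositive)
    {a s : ℝ} (ha : 0 < a) (hs : 0 < s) :
    ‖(T + a • 1)⁻¹ʳ * (T * (T + s • 1)⁻¹ʳ)‖ ≤ (a + s)⁻¹ := by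
  refine opNorm_le_bound _ (by positivity) fun x => ?_
  set w := (T + a • 1)⁻¹ʳ ((T + s • 1)⁻¹ʳ x)
  have hw : (T + a • 1)⁻¹ʳ (T ((T + s • 1)⁻¹ʳ x)) = T w :=
    congr($((commute_ringInverse_add_smul_one T a).eq.symm) _)
  have hx : ((T + s • 1) * (T + a • 1)) w = x := by
    rw [mul_apply_eq_comp, apply_ringInverse_apply (hT.isUnit_add_smul_one ha),
      apply_ringInverse_apply (hT.isUnit_add_smul_one hs)]
  have h := hT.mul_norm_apply_le_norm_add_smul_one_mul_add_smul_one_apply hs.le ha.le w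
  rw [hx] at h
  rw [mul_apply_eq_comp, mul_apply_eq_comp, hw, inv_mul_eq_div, le_div_iff₀' (by positivity)]
  linarith

theorem continuousOn_ringInverse_add_smul_one (hT : T.IsPositive) :
    ContinuousOn (fun s : ℝ => (T + s • 1)⁻¹ʳ) (Ioi 0) := by
  intro s (hs : 0 < s)
  have h := NormedRing.inverse_continuousAt (hT.isUnit_add_smul_one hs).unit
  rw [IsUnit.unit_spec] at h
  exact (h.comp (f := fun s : ℝ => T + s • (1 : H →L[ℝ] H)) (by fun_prop)).continuousWithinAt

theorem integrableOn_rpow_smul_mul_ringInverse_add_smul_one (hT : T.IsPositive) {r : ℝ}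
    (hr : r ∈ Ioo 0 1) :
    IntegrableOn (fun s : ℝ => s ^ (r - 1) • (T * (T + s • 1)⁻¹ʳ)) (Ioi 0) := by
  refine ((integrableOn_rpowIntegrand₀₁_Ioi hr zero_le_one).const_mul (1 + ‖T‖)).mono' ?_ ?_
  · refine ContinuousOn.aestronglyMeasurable ?_ measurableSet_Ioi
    exact (continuousOn_id.rpow_const fun s (hs : 0 < s) => Or.inl hs.ne').smul
      (continuousOn_const.mul hT.continuousOn_ringInverse_add_smul_one)
  · refine (ae_restrict_mem measurableSet_Ioi).mono fun s (hs : 0 < s) => ?_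
    rw [norm_smul, norm_of_nonneg (by positivity), rpowIntegrand₀₁_eq_pow_div hr hs.le zero_le_one]
    calc s ^ (r - 1) * ‖T * (T + s • 1)⁻¹ʳ‖ ≤ s ^ (r - 1) * ((1 + ‖T‖) / (s + 1)) := by
          gcongr
          exact hT.norm_mul_ringInverse_add_smul_one_le hs
      _ = (1 + ‖T‖) * (s ^ (r - 1) * 1 / (s + 1)) := by ring

theorem norm_smul_ringInverse_add_smul_one_mul_fracPow_le (hT : T.IsPositive) {r a : ℝ}
    (hr : r ∈ Ioo 0 1) (ha : 0 < a) :
    ‖a • (T + a • 1)⁻¹ʳ * fracPow T r‖ ≤ a ^ r := by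
  have hG := hT.integrableOn_rpow_smul_mul_ringInverse_add_smul_one hr
  have hsin : 0 < sin (π * r) :=
    sin_pos_of_pos_of_lt_pi (mul_pos pi_pos hr.1) (mul_lt_of_lt_one_right pi_pos hr.2)
  have hbound (s : ℝ) (hs : 0 < s) :
      ‖a • (T + a • 1)⁻¹ʳ * (s ^ (r - 1) • (T * (T + s • 1)⁻¹ʳ))‖ ≤ rpowIntegrand₀₁ r s a := by
    rw [smul_mul_assoc, mul_smul_comm, norm_smul, norm_smul, norm_of_nonneg ha.le,
      norm_of_nonneg (by positivity), rpowIntegrand₀₁_eq_pow_div hr hs.le ha.le]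
    calc a * (s ^ (r - 1) * ‖(T + a • 1)⁻¹ʳ * (T * (T + s • 1)⁻¹ʳ)‖)
        ≤ a * (s ^ (r - 1) * (a + s)⁻¹) := by
          gcongr
          exact hT.norm_ringInverse_add_smul_one_mul_mul_ringInverse_add_smul_one_le ha hs
      _ = s ^ (r - 1) * a / (s + a) := by rw [add_comm a s]; ring
  calc ‖a • (T + a • 1)⁻¹ʳ * fracPow T r‖
      = sin (π * r) / π *
          ‖∫ s in Ioi (0 : ℝ), a • (T + a • 1)⁻¹ʳ * (s ^ (r - 1) • (T * (T + s • 1)⁻¹ʳ))‖ := by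
        rw [fracPow, mul_comm r π, mul_smul_comm, ← integral_const_mul_of_integrable hG,
          norm_smul, norm_of_nonneg (div_pos hsin pi_pos).le]
    _ ≤ sin (π * r) / π * ∫ s in Ioi 0, rpowIntegrand₀₁ r s a := by
        gcongr
        exact norm_integral_le_of_norm_le (integrableOn_rpowIntegrand₀₁_Ioi hr ha.le)
          ((ae_restrict_mem measurableSet_Ioi).mono hbound)
    _ = a ^ r := by
        rw [integral_rpowIntegrand₀₁_eq_rpow_mul_const hr ha.le, integral_rpowIntegrand₀₁_one hr]
        field_simp

theorem norm_smul_ringInverse_add_smul_one_mul_opRpow_le (hT : T.IsPositive) {r a : ℝ}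
    (hr : r ∈ Ioc 0 1) (ha : 0 < a) :
    ‖a • (T + a • 1)⁻¹ʳ * opRpow T r‖ ≤ a ^ r := by
  rcases hr.2.lt_or_eq with hr1 | rfl
  · rw [opRpow_of_mem_Ioo T ⟨hr.1, hr1⟩]
    exact hT.norm_smul_ringInverse_add_smul_one_mul_fracPow_le ⟨hr.1, hr1⟩ ha
  · rw [opRpow_one, rpow_one, smul_mul_assoc, norm_smul, norm_of_nonneg ha.le,
      ← (commute_ringInverse_add_smul_one T a).eq]
    exact mul_le_of_le_one_right ha.le (hT.norm_mul_ringInverse_add_smul_one_le_one ha)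

end ContinuousLinearMap.IsPositive

theorem tikhonov_approximation_error_general
    {H : Type*} [NormedAddCommGroup H] [InnerProductSpace ℝ H] [CompleteSpace H]
    (T : H →L[ℝ] H) (hT : T.IsPositive)
    (r lam R : ℝ) (hr : r ∈ Set.Ioc (0 : ℝ) 1) (hlam : lam ∈ Set.Ioo (0 : ℝ) 1)
    (h : H) (hh : ‖h‖ ≤ R) :
    ‖opRpow (T + lam • 1) (-1) (T (opRpow T r h)) - opRpow T r h‖ ≤ R * lam ^ r := by
  rw [opRpow_neg_one, ContinuousLinearMap.ringInverse_add_smul_one_apply_sub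
    (hT.isUnit_add_smul_one hlam.1), norm_neg]
  calc ‖(lam • (T + lam • 1)⁻¹ʳ * opRpow T r) h‖ ≤ lam ^ r * ‖h‖ :=
        (lam • (T + lam • 1)⁻¹ʳ * opRpow T r).le_of_opNorm_le
          (hT.norm_smul_ringInverse_add_smul_one_mul_opRpow_le hr hlam.1) h
    _ ≤ lam ^ r * R := mul_le_mul_of_nonneg_left hh (rpow_nonneg hlam.1.le r)
    _ = R * lam ^ r := mul_comm _ _

/-- Approximation error of Tikhonov regularization under the source condition `f★ = T^r h`
(Lemma A.2.1): `‖(T + λI)⁻¹ T f★ - f★‖ ≤ R · λ^r`. -/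
theorem tikhonov_approximation_error
    {H : Type*} [NormedAddCommGroup H] [InnerProductSpace ℝ H] [CompleteSpace H]
    [TopologicalSpace.SeparableSpace H]
    (T : H →L[ℝ] H) (hT : T.IsPositive)
    (r lam R : ℝ) (hr : r ∈ Set.Ioc (0 : ℝ) 1) (hlam : lam ∈ Set.Ioo (0 : ℝ) 1)
    (hR : 0 < R) (h : H) (hh : ‖h‖ ≤ R) :
    ‖opRpow (T + lam • 1) (-1) (T (opRpow T r h)) - opRpow T r h‖ ≤ R * lam ^ r :=
  tikhonov_approximation_error_general T hT r lam R hr hlam h hh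
end

section
/- Let τ ∈ (0,1), let Y be a real random variable with cumulative distribution function F(t) = P(Y ≤ t), and let ρ_τ(u) = u·(τ − 1{u ≤ 0}) be the check loss. Suppose F is c₁-Lipschitz for some c₁ > 0 (i.e., |F(s) − F(t)| ≤ c₁·|s − t| for all s, t), and let q ∈ ℝ satisfy F(q) = τ. Then for every b ∈ ℝ, E[ρ_τ(Y − b) − ρ_τ(Y − q)] ≤ (c₁/2)·(b − q)². -/
/-!
Since `ρ_τ(u) = τ u + (-u)⁺`, the excess loss at `Y` is `(b - Y)⁺ - (q - Y)⁺ - τ (b - q)`, and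
`(b - y)⁺ - (q - y)⁺ = ∫_q^b 1{y ≤ t} dt`. Fubini turns the excess risk into
`∫_q^b (F t - F q) dt`, and integrating the Lipschitz bound `F t - F q ≤ c₁ |t - q|` gives
`c₁ (b - q)² / 2`.
-/

open MeasureTheory
open scoped RealInnerProductSpace ENNReal

/-- The check (pinball) loss at quantile level `τ`: `ρ_τ(u) = u * (τ - 1{u ≤ 0})`. -/
noncomputable def checkLoss (τ u : ℝ) : ℝ := u * (τ - if u ≤ 0 then 1 else 0)

open Set

lemma checkLoss_eq_mul_add_max (τ u : ℝ) : checkLoss τ u = τ * u + max (-u) 0 := by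
  rcases le_or_gt u 0 with hu | hu
  · rw [checkLoss, if_pos hu, max_eq_left (by linarith)]; ring
  · rw [checkLoss, if_neg hu.not_ge, max_eq_right (by linarith)]; ring

lemma checkLoss_sub_sub_checkLoss_sub (τ y b q : ℝ) :
    checkLoss τ (y - b) - checkLoss τ (y - q) = max (b - y) 0 - max (q - y) 0 - τ * (b - q) := by
  simp only [checkLoss_eq_mul_add_max, neg_sub]; ring

/-- A right derivative, so that the kink at `t = y` needs no special treatment. -/
lemma hasDerivWithinAt_max_sub_Ioi (y t : ℝ) :
    HasDerivWithinAt (fun s => max (s - y) 0) ((Ici y).indicator 1 t) (Ioi t) t := by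
  rcases lt_or_ge t y with hty | hyt
  · rw [indicator_of_notMem (notMem_Ici.2 hty)]
    refine (hasDerivAt_const t (0 : ℝ)).hasDerivWithinAt.congr_of_eventuallyEq ?_
      (by simp [hty.le])
    filter_upwards [nhdsWithin_le_nhds (Iio_mem_nhds hty)] with s hs
    simp [(mem_Iio.1 hs).le]
  · rw [indicator_of_mem (mem_Ici.2 hyt), Pi.one_apply]
    refine ((hasDerivAt_id t).sub_const y).hasDerivWithinAt.congr (fun s hs => ?_) (by simp [hyt])
    simp [hyt.trans (mem_Ioi.1 hs).le]

lemma intervalIntegral_indicator_Ici (y a b : ℝ) :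
    ∫ t in a..b, (Ici y).indicator 1 t = max (b - y) 0 - max (a - y) 0 :=
  intervalIntegral.integral_eq_sub_of_hasDeriv_right (by fun_prop)
    (fun t _ => (hasDerivWithinAt_max_sub_Ioi y t).mono_of_mem_nhdsWithin self_mem_nhdsWithin)
    (intervalIntegrable_iff.2 ((integrableOn_const (by simp)).indicator measurableSet_Ici))

lemma integral_max_sub_max_eq_intervalIntegral_measureReal {Ω : Type*} [MeasurableSpace Ω]
    (P : Measure Ω) [IsFiniteMeasure P] {Y : Ω → ℝ} (hY : Measurable Y) (a b : ℝ) :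
    ∫ ω, (max (b - Y ω) 0 - max (a - Y ω) 0) ∂P = ∫ t in a..b, P.real {ω | Y ω ≤ t} := by
  have : IsFiniteMeasure (volume.restrict (uIoc a b)) := isFiniteMeasure_restrict.2 (by simp)
  have hint : Integrable (Function.uncurry fun t ω => {ω | Y ω ≤ t}.indicator (1 : Ω → ℝ) ω)
      ((volume.restrict (uIoc a b)).prod P) :=
    (integrable_const 1).indicator (measurableSet_le (hY.comp measurable_snd) measurable_fst)
  calc ∫ ω, (max (b - Y ω) 0 - max (a - Y ω) 0) ∂P
      = ∫ ω, (∫ t in a..b, {ω | Y ω ≤ t}.indicator (1 : Ω → ℝ) ω) ∂P :=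
        integral_congr_ae (.of_forall fun ω => (intervalIntegral_indicator_Ici (Y ω) a b).symm)
    _ = ∫ t in a..b, P.real {ω | Y ω ≤ t} := by
        rw [← intervalIntegral_integral_swap hint]
        exact intervalIntegral.integral_congr fun t _ =>
          integral_indicator_one (hY measurableSet_Iic)

lemma integral_checkLoss_sub_sub_checkLoss_sub {Ω : Type*} [MeasurableSpace Ω]
    (P : Measure Ω) [IsProbabilityMeasure P] {Y : Ω → ℝ} (hY : Measurable Y) (τ b q : ℝ) :
    ∫ ω, (checkLoss τ (Y ω - b) - checkLoss τ (Y ω - q)) ∂P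
      = ∫ t in q..b, (P.real {ω | Y ω ≤ t} - τ) := by
  have hmax : Integrable (fun ω => max (b - Y ω) 0 - max (q - Y ω) 0) P := by
    refine .of_bound (by fun_prop) |b - q| (.of_forall fun ω => ?_)
    simpa using abs_max_sub_max_le_abs (b - Y ω) (q - Y ω) 0
  simp_rw [checkLoss_sub_sub_checkLoss_sub]
  rw [integral_sub hmax (integrable_const _),
    integral_max_sub_max_eq_intervalIntegral_measureReal P hY,
    intervalIntegral.integral_sub ?_ intervalIntegrable_const]
  · simp [mul_comm]
  · have hmono : Monotone fun t => P.real {ω | Y ω ≤ t} := fun s t hst =>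
      measureReal_mono fun ω (h : Y ω ≤ s) => h.trans hst
    exact hmono.intervalIntegrable

lemma intervalIntegral_sub_le_of_abs_sub_le {f : ℝ → ℝ} {K : ℝ}
    (hf : ∀ s t, |f s - f t| ≤ K * |s - t|) (a b : ℝ) :
    ∫ t in a..b, (f t - f a) ≤ K / 2 * (b - a) ^ 2 := by
  have hfc : Continuous f :=
    (LipschitzWith.of_dist_le' (by simpa only [Real.dist_eq] using hf)).continuous
  rcases le_total a b with hab | hba
  · calc ∫ t in a..b, (f t - f a) ≤ ∫ t in a..b, K * (t - a) := by
          refine intervalIntegral.integral_mono_on hab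
            ((hfc.sub continuous_const).intervalIntegrable _ _)
            ((by fun_prop : Continuous fun t => K * (t - a)).intervalIntegrable _ _) fun t ht => ?_
          have := hf t a
          rw [abs_of_nonneg (sub_nonneg.2 ht.1)] at this
          exact (le_abs_self _).trans this
      _ = K / 2 * (b - a) ^ 2 := by
          rw [intervalIntegral.integral_const_mul,
            intervalIntegral.integral_comp_sub_right (fun x => x), integral_id]
          ring
  · calc ∫ t in a..b, (f t - f a) = ∫ t in b..a, (f a - f t) := by
          rw [intervalIntegral.integral_symm, ← intervalIntegral.integral_neg]; simp
      _ ≤ ∫ t in b..a, K * (a - t) := by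
          refine intervalIntegral.integral_mono_on hba
            ((continuous_const.sub hfc).intervalIntegrable _ _)
            ((by fun_prop : Continuous fun t => K * (a - t)).intervalIntegrable _ _) fun t ht => ?_
          have := hf a t
          rw [abs_of_nonneg (sub_nonneg.2 ht.2)] at this
          exact (le_abs_self _).trans this
      _ = K / 2 * (b - a) ^ 2 := by
          rw [intervalIntegral.integral_const_mul,
            intervalIntegral.integral_comp_sub_left (fun x => x), integral_id]
          ring

theorem excess_quantile_risk_upper_bound_general
    {Ω : Type*} [MeasurableSpace Ω] (P : Measure Ω) [IsProbabilityMeasure P]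
    (τ : ℝ)
    (Y : Ω → ℝ) (hY : Measurable Y)
    (F : ℝ → ℝ) (hF : ∀ t, F t = (P {ω | Y ω ≤ t}).toReal)
    (c₁ : ℝ) (hLip : ∀ s t, |F s - F t| ≤ c₁ * |s - t|)
    (q : ℝ) (hq : F q = τ) (b : ℝ) :
    ∫ ω, (checkLoss τ (Y ω - b) - checkLoss τ (Y ω - q)) ∂P ≤ c₁ / 2 * (b - q)^2 := by
  rw [integral_checkLoss_sub_sub_checkLoss_sub P hY, ← hq]
  simp_rw [measureReal_def, ← hF]
  exact intervalIntegral_sub_le_of_abs_sub_le hLip q b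

/-- Excess quantile risk is bounded by the squared distance to the quantile when the cdf is
`c₁`-Lipschitz. -/
theorem excess_quantile_risk_upper_bound
    {Ω : Type*} [MeasurableSpace Ω] (P : Measure Ω) [IsProbabilityMeasure P]
    (τ : ℝ) (hτ : τ ∈ Set.Ioo (0 : ℝ) 1)
    (Y : Ω → ℝ) (hY : Measurable Y)
    (F : ℝ → ℝ) (hF : ∀ t, F t = (P {ω | Y ω ≤ t}).toReal)
    (c₁ : ℝ) (hc₁ : 0 < c₁) (hLip : ∀ s t, |F s - F t| ≤ c₁ * |s - t|)
    (q : ℝ) (hq : F q = τ) (b : ℝ) :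
    ∫ ω, (checkLoss τ (Y ω - b) - checkLoss τ (Y ω - q)) ∂P ≤ c₁ / 2 * (b - q)^2 :=
  excess_quantile_risk_upper_bound_general P τ Y hY F hF c₁ hLip q hq b
end

section
/- Let τ ∈ (0,1), let Y be a real random variable with cumulative distribution function F(t) = P(Y ≤ t), and let ρ_τ(u) = u·(τ − 1{u ≤ 0}) be the check loss. Suppose F is c₁-Lipschitz for some c₁ > 0, and let q ∈ ℝ satisfy F(q) = τ. Let a, b ∈ ℝ and c₂ > 0 be such that |F(a + δ) − F(a)| ≥ c₂·|δ| for every δ with |δ| ≤ |b − a|. Then E[ρ_τ(Y − b) − ρ_τ(Y − a)] ≥ (c₂/2)·(b − a)² − c₁·|b − a|·|a − q|. -/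
/-!
Since `ρ_τ(u) = τ u + (-u)⁺`, the loss difference is `τ (a - b) + (b - y)⁺ - (a - y)⁺`, and
`(b - y)⁺ - (a - y)⁺ = ∫_a^b 1{y ≤ t} dt`; taking expectations (layer cake) gives
`E[ρ_τ(Y - b) - ρ_τ(Y - a)] = (b - a) (F a - F q) + ∫_a^b (F t - F a) dt` because `F q = τ`.
The first term is at least `-c₁ |b - a| |a - q|` by the Lipschitz bound. For `t` between `a`
and `b`, calibration gives `|F t - F a| ≥ c₂ |t - a|` and monotonicity gives `F t - F a` the sign
of `t - a`, so the second term is at least `∫_a^b c₂ (t - a) dt = c₂ (b - a)² / 2`.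
-/

open MeasureTheory
open scoped RealInnerProductSpace ENNReal

theorem checkLoss_eq_mul_add_posPart (τ u : ℝ) : checkLoss τ u = τ * u + (-u)⁺ := by
  unfold checkLoss
  split_ifs with hu
  · rw [posPart_eq_self.2 (by linarith)]; ring
  · rw [posPart_eq_zero.2 (by linarith)]; ring

theorem abs_posPart_sub_posPart_le (a b y : ℝ) : |(b - y)⁺ - (a - y)⁺| ≤ |b - a| := by
  simpa [Real.dist_eq] using lipschitzWith_posPart.dist_le_mul (b - y) (a - y)

theorem posPart_sub_posPart_nonneg {a b : ℝ} (hab : a ≤ b) (y : ℝ) : 0 ≤ (b - y)⁺ - (a - y)⁺ :=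
  sub_nonneg.2 (posPart_mono (by linarith))

theorem posPart_sub_posPart_le {a b : ℝ} (hab : a ≤ b) (y : ℝ) : (b - y)⁺ - (a - y)⁺ ≤ b - a := by
  grind [posPart_def]

theorem le_posPart_sub_posPart_iff {a b t y : ℝ} (ht : t ∈ Set.Ioc 0 (b - a)) :
    t ≤ (b - y)⁺ - (a - y)⁺ ↔ y ≤ b - t := by
  obtain ⟨ht₀, htb⟩ := ht
  grind [posPart_def]

section Expectation

variable {Ω : Type*} [MeasurableSpace Ω] (P : Measure Ω) {Y : Ω → ℝ}

theorem integrable_posPart_sub_posPart [IsFiniteMeasure P] (hY : Measurable Y) (a b : ℝ) :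
    Integrable (fun ω => (b - Y ω)⁺ - (a - Y ω)⁺) P :=
  (integrable_const |b - a|).mono' (by fun_prop)
    (ae_of_all _ fun ω => abs_posPart_sub_posPart_le a b (Y ω))

theorem integral_posPart_sub_posPart_of_le [IsFiniteMeasure P] (hY : Measurable Y) {a b : ℝ}
    (hab : a ≤ b) :
    ∫ ω, ((b - Y ω)⁺ - (a - Y ω)⁺) ∂P = ∫ t in a..b, P.real {ω | Y ω ≤ t} := by
  rw [(integrable_posPart_sub_posPart P hY a b).integral_eq_integral_Ioc_meas_le (M := b - a)
      (ae_of_all _ fun ω => posPart_sub_posPart_nonneg hab _)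
      (ae_of_all _ fun ω => posPart_sub_posPart_le hab _),
    setIntegral_congr_fun (g := fun t => P.real {ω | Y ω ≤ b - t}) measurableSet_Ioc
      fun t ht => by simp only [le_posPart_sub_posPart_iff ht],
    ← intervalIntegral.integral_of_le (by linarith),
    intervalIntegral.integral_comp_sub_left (fun t => P.real {ω | Y ω ≤ t}) b]
  simp

theorem integral_posPart_sub_posPart [IsFiniteMeasure P] (hY : Measurable Y) (a b : ℝ) :
    ∫ ω, ((b - Y ω)⁺ - (a - Y ω)⁺) ∂P = ∫ t in a..b, P.real {ω | Y ω ≤ t} := by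
  rcases le_total a b with hab | hba
  · exact integral_posPart_sub_posPart_of_le P hY hab
  · rw [intervalIntegral.integral_symm, ← integral_posPart_sub_posPart_of_le P hY hba,
      ← integral_neg]
    simp

theorem integral_checkLoss_sub_checkLoss [IsProbabilityMeasure P] (hY : Measurable Y)
    (τ a b : ℝ) :
    ∫ ω, (checkLoss τ (Y ω - b) - checkLoss τ (Y ω - a)) ∂P
      = τ * (a - b) + ∫ t in a..b, P.real {ω | Y ω ≤ t} := by
  have hpointwise : ∀ ω, checkLoss τ (Y ω - b) - checkLoss τ (Y ω - a)
      = τ * (a - b) + ((b - Y ω)⁺ - (a - Y ω)⁺) := fun ω => by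
    simp only [checkLoss_eq_mul_add_posPart, neg_sub]; ring
  simp_rw [hpointwise]
  rw [integral_add (integrable_const _) (integrable_posPart_sub_posPart P hY a b),
    integral_posPart_sub_posPart P hY]
  simp

end Expectation

theorem Monotone.le_intervalIntegral_sub_of_calibrated {F : ℝ → ℝ} (hF : Monotone F)
    {a b c : ℝ} (hcal : ∀ d : ℝ, |d| ≤ |b - a| → c * |d| ≤ |F (a + d) - F a|) :
    c / 2 * (b - a) ^ 2 ≤ (∫ t in a..b, F t) - (b - a) * F a := by
  have hcal' : ∀ t ∈ Set.uIcc a b, c * |t - a| ≤ |F t - F a| := fun t ht => by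
    simpa using hcal (t - a) (Set.abs_sub_left_of_mem_uIcc ht)
  have hslope : IntervalIntegrable (fun t => c * (t - a)) volume a b := by
    apply Continuous.intervalIntegrable; fun_prop
  have hline : IntervalIntegrable (fun t => F a + c * (t - a)) volume a b :=
    intervalIntegrable_const.add hslope
  have hline_integral :
      ∫ t in a..b, (F a + c * (t - a)) = (b - a) * F a + c / 2 * (b - a) ^ 2 := by
    rw [intervalIntegral.integral_add intervalIntegrable_const hslope,
      intervalIntegral.integral_const_mul, intervalIntegral.integral_comp_sub_right (fun t => t)]
    simp
    ring
  rcases le_total a b with hab | hba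
  · have hbelow : ∀ t ∈ Set.Icc a b, F a + c * (t - a) ≤ F t := fun t ht => by
      have h := hcal' t (Set.Icc_subset_uIcc ht)
      rw [abs_of_nonneg (sub_nonneg.2 ht.1), abs_of_nonneg (sub_nonneg.2 (hF ht.1))] at h
      linarith
    have := intervalIntegral.integral_mono_on hab hline hF.intervalIntegrable hbelow
    linarith
  · have habove : ∀ t ∈ Set.Icc b a, F t ≤ F a + c * (t - a) := fun t ht => by
      have h := hcal' t (Set.Icc_subset_uIcc' ht)
      rw [abs_of_nonpos (sub_nonpos.2 ht.2), abs_of_nonpos (sub_nonpos.2 (hF ht.2))] at h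
      linarith
    have := intervalIntegral.integral_mono_on hba hF.intervalIntegrable hline.symm habove
    rw [intervalIntegral.integral_symm a b, intervalIntegral.integral_symm a b, hline_integral]
      at this
    linarith

theorem check_loss_local_strong_convexity_general
    {Ω : Type*} [MeasurableSpace Ω] (P : Measure Ω) [IsProbabilityMeasure P]
    (τ : ℝ)
    (Y : Ω → ℝ) (hY : Measurable Y)
    (F : ℝ → ℝ) (hF : ∀ t, F t = (P {ω | Y ω ≤ t}).toReal)
    (c₁ : ℝ) (hLip : ∀ s t, |F s - F t| ≤ c₁ * |s - t|)
    (q : ℝ) (hq : F q = τ)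
    (a b c₂ : ℝ)
    (hcal : ∀ d : ℝ, |d| ≤ |b - a| → c₂ * |d| ≤ |F (a + d) - F a|) :
    c₂ / 2 * (b - a)^2 - c₁ * |b - a| * |a - q| ≤
      ∫ ω, (checkLoss τ (Y ω - b) - checkLoss τ (Y ω - a)) ∂P := by
  have hcdf : F = fun t => P.real {ω | Y ω ≤ t} := funext fun t => by rw [hF, measureReal_def]
  have hmono : Monotone F := fun s t hst => by
    rw [hcdf]
    exact measureReal_mono fun ω (h : Y ω ≤ s) => h.trans hst
  have hfirst_order : -(c₁ * |b - a| * |a - q|) ≤ (b - a) * (F a - τ) := by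
    have := mul_le_mul_of_nonneg_left (hLip a q) (abs_nonneg (b - a))
    rw [← hq]
    linarith [neg_abs_le ((b - a) * (F a - F q)), abs_mul (b - a) (F a - F q)]
  rw [integral_checkLoss_sub_checkLoss P hY, ← hcdf]
  linarith [hmono.le_intervalIntegral_sub_of_calibrated hcal]

/-- Adaptive local strong convexity of the expected check loss around an approximate quantile
(scalar core of Lemma A.2.4). -/
theorem check_loss_local_strong_convexity
    {Ω : Type*} [MeasurableSpace Ω] (P : Measure Ω) [IsProbabilityMeasure P]
    (τ : ℝ) (hτ : τ ∈ Set.Ioo (0 : ℝ) 1)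
    (Y : Ω → ℝ) (hY : Measurable Y)
    (F : ℝ → ℝ) (hF : ∀ t, F t = (P {ω | Y ω ≤ t}).toReal)
    (c₁ : ℝ) (hc₁ : 0 < c₁) (hLip : ∀ s t, |F s - F t| ≤ c₁ * |s - t|)
    (q : ℝ) (hq : F q = τ)
    (a b c₂ : ℝ) (hc₂ : 0 < c₂)
    (hcal : ∀ d : ℝ, |d| ≤ |b - a| → c₂ * |d| ≤ |F (a + d) - F a|) :
    c₂ / 2 * (b - a)^2 - c₁ * |b - a| * |a - q| ≤
      ∫ ω, (checkLoss τ (Y ω - b) - checkLoss τ (Y ω - a)) ∂P :=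
  check_loss_local_strong_convexity_general P τ Y hY F hF c₁ hLip q hq a b c₂ hcal
end
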